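/- arXiv:1606.08251 — 2 statements merged into one kernel-verified Lean document; each statement's English description precedes it below -/
import Mathlib

section
/- Let Z ≥ 0 be a random variable such that E[Z^{2n}]^{1/(2n)} ≤ z√n for all integers n ≥ 1, for some z ≥ 0. Then for every n ≥ 1, E[Z^{2n}] ≤ (e/√2)·(e z²/2)^n · E[V^{2n}], where V is a standard centered Gaussian. -/
/-!
The hypothesis gives `E[Z^{2n}] ≤ (z √n)^{2n} = z^{2n} n^n`, while `E[V^{2n}] = (2n-1)‼`, which
the Gamma integral yields from `Γ(n + 1/2)`. It remains to see `n^n ≤ (e/√2) (e/2)^n (2n-1)‼`.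
Write `(2n-1)‼ = (2n)! / (2^n n!)` and use Stirling's bounds
`√(2πm) (m/e)^m ≤ m! ≤ (e/√2) √(2m) (m/e)^m`; the upper one holds because the Stirling
sequence `m! / (√(2m) (m/e)^m)` decreases from its value `e/√2` at `m = 1`.
-/

open MeasureTheory ProbabilityTheory Real
open scoped Nat NNReal

theorem Nat.factorial_two_mul_eq (n : ℕ) : (2 * n)! = 2 ^ n * n ! * (2 * n - 1)‼ := by
  cases n with
  | zero => rfl
  | succ n =>
    rw [show 2 * (n + 1) - 1 = 2 * n + 1 by omega, ← doubleFactorial_two_mul,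
      show 2 * (n + 1) = 2 * n + 1 + 1 by ring, factorial_eq_mul_doubleFactorial]

theorem Stirling.factorial_le_exp_one_div_sqrt_two_mul {n : ℕ} (hn : n ≠ 0) :
    (n ! : ℝ) ≤ exp 1 / √2 * (√(2 * n) * (n / exp 1) ^ n) := by
  have h : stirlingSeq n ≤ exp 1 / √2 := by
    obtain ⟨m, rfl⟩ := Nat.exists_eq_succ_of_ne_zero hn
    exact stirlingSeq_one ▸ stirlingSeq'_antitone m.zero_le
  rwa [stirlingSeq, div_le_iff₀ (by positivity)] at h

theorem pow_self_le_doubleFactorial (n : ℕ) :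
    (n : ℝ) ^ n ≤ exp 1 / √2 * (exp 1 / 2) ^ n * (2 * n - 1)‼ := by
  rcases eq_or_ne n 0 with rfl | hn
  · rw [pow_zero, pow_zero, mul_one, Nat.mul_zero, Nat.zero_sub, Nat.doubleFactorial, Nat.cast_one,
      mul_one, one_le_div (by positivity)]
    linarith [sqrt_two_lt_three_halves, exp_one_gt_two]
  set K : ℝ := 2 ^ n * (√(2 * n) * (n / exp 1) ^ n)
  have hK : 0 < K := by positivity
  refine le_of_mul_le_mul_right ?_ hK
  have hsqrt : √(2 * n) ≤ √(2 * π * (2 * n : ℕ)) := by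
    push_cast
    exact sqrt_le_sqrt (by nlinarith [pi_gt_three, n.cast_nonneg (α := ℝ)])
  calc (n : ℝ) ^ n * K = √(2 * n) * (2 * n * (n / exp 1)) ^ n := by ring
    _ = √(2 * n) * ((2 * n / exp 1) ^ 2) ^ n * (exp 1 / 2) ^ n := by
        rw [mul_assoc _ (_ ^ n), ← mul_pow]
        congr 2
        field_simp
    _ = √(2 * n) * (2 * n / exp 1) ^ (2 * n) * (exp 1 / 2) ^ n := by rw [pow_mul]
    _ ≤ √(2 * π * (2 * n : ℕ)) * ((2 * n : ℕ) / exp 1) ^ (2 * n) * (exp 1 / 2) ^ n := by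
        push_cast at hsqrt ⊢
        gcongr
    _ ≤ (2 * n)! * (exp 1 / 2) ^ n := by
        gcongr
        exact Stirling.le_factorial_stirling (2 * n)
    _ = 2 ^ n * n ! * (2 * n - 1)‼ * (exp 1 / 2) ^ n := by
        rw [Nat.factorial_two_mul_eq]
        push_cast
        ring
    _ ≤ 2 ^ n * (exp 1 / √2 * (√(2 * n) * (n / exp 1) ^ n)) * (2 * n - 1)‼ * (exp 1 / 2) ^ n := by
        gcongr
        exact Stirling.factorial_le_exp_one_div_sqrt_two_mul hn
    _ = exp 1 / √2 * (exp 1 / 2) ^ n * (2 * n - 1)‼ * K := by ring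

theorem integral_pow_two_mul_mul_exp_neg_sq_div_two (n : ℕ) :
    ∫ x : ℝ, x ^ (2 * n) * exp (-x ^ 2 / 2) = √(2 * π) * (2 * n - 1)‼ := by
  set f : ℝ → ℝ := fun x => x ^ (2 * n) * exp (-x ^ 2 / 2)
  have hf : ∀ x, f |x| = f x := fun x => by simp only [f, (even_two_mul n).pow_abs, sq_abs]
  have hGamma := integral_rpow_mul_exp_neg_mul_rpow (p := 2) (q := 2 * n) (b := 1 / 2)
    two_pos (by linarith [n.cast_nonneg (α := ℝ)]) (by norm_num)
  rw [show (2 * n + 1 : ℝ) / 2 = n + 1 / 2 by ring, Gamma_nat_add_half] at hGamma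
  have hf_Ioi : ∫ x in Set.Ioi (0 : ℝ), f x
      = ∫ x in Set.Ioi (0 : ℝ), x ^ (2 * n : ℝ) * exp (-(1 / 2) * x ^ (2 : ℝ)) := by
    refine setIntegral_congr_fun measurableSet_Ioi fun x _ => ?_
    dsimp only [f]
    rw [rpow_two, show (2 * n : ℝ) = ((2 * n : ℕ) : ℝ) by push_cast; ring, rpow_natCast]
    ring_nf
  have hpow : (1 / 2 : ℝ) ^ (-(2 * n + 1 : ℝ) / 2) = 2 ^ n * √2 := by
    rw [one_div, inv_rpow zero_le_two, ← rpow_neg zero_le_two,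
      show -(-(2 * n + 1 : ℝ) / 2) = n + 1 / 2 by ring, rpow_add two_pos, rpow_natCast,
      ← sqrt_eq_rpow]
  rw [← integral_congr_ae (ae_of_all _ hf), integral_comp_abs, hf_Ioi, hGamma, hpow,
    sqrt_mul zero_le_two]
  field_simp

theorem integral_pow_two_mul_gaussianReal (n : ℕ) (v : ℝ≥0) :
    ∫ x, x ^ (2 * n) ∂gaussianReal 0 v = v ^ n * (2 * n - 1)‼ := by
  have hmap : (gaussianReal 0 1).map (√v * ·) = gaussianReal 0 v := by
    rw [gaussianReal_map_const_mul]
    congr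
    · simp
    · ext; simp
  rw [← hmap, integral_map (by fun_prop) (by fun_prop),
    integral_gaussianReal_eq_integral_smul one_ne_zero]
  calc ∫ x, gaussianPDFReal 0 1 x • (√v * x) ^ (2 * n)
      = ∫ x, v ^ n * (√(2 * π))⁻¹ * (x ^ (2 * n) * exp (-x ^ 2 / 2)) := by
        congr 1 with x
        simp only [gaussianPDFReal, pow_mul _ 2 n, mul_pow, sq_sqrt v.coe_nonneg, smul_eq_mul,
          NNReal.coe_one, mul_one, sub_zero]
        ring
    _ = v ^ n * (2 * n - 1)‼ := by
        rw [integral_const_mul, integral_pow_two_mul_mul_exp_neg_sq_div_two]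
        field_simp

theorem stmt6_general {Ω : Type*} [MeasureSpace Ω]
    (Z : Ω → ℝ) (z : ℝ)
    (hmom : ∀ n : ℕ, 1 ≤ n →
      (∫ ω, Z ω ^ (2 * n) ∂ℙ) ^ ((1 : ℝ) / (2 * n)) ≤ z * Real.sqrt n) :
    ∀ n : ℕ, 1 ≤ n →
      ∫ ω, Z ω ^ (2 * n) ∂ℙ
        ≤ (Real.exp 1 / Real.sqrt 2) * (Real.exp 1 * z ^ 2 / 2) ^ n
            * ∫ x, x ^ (2 * n) ∂(gaussianReal 0 1) := by
  intro n hn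
  have hmom_nonneg : 0 ≤ ∫ ω, Z ω ^ (2 * n) ∂ℙ :=
    integral_nonneg fun ω => (even_two_mul n).pow_nonneg _
  have hmom_le : ∫ ω, Z ω ^ (2 * n) ∂ℙ ≤ (z ^ 2) ^ n * (n : ℝ) ^ n := by
    have h := hmom n hn
    rw [one_div, show (2 * n : ℝ) = ((2 * n : ℕ) : ℝ) by push_cast; ring] at h
    calc ∫ ω, Z ω ^ (2 * n) ∂ℙ
        = ((∫ ω, Z ω ^ (2 * n) ∂ℙ) ^ ((2 * n : ℕ) : ℝ)⁻¹) ^ (2 * n) :=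
          (rpow_inv_natCast_pow hmom_nonneg (by omega)).symm
      _ ≤ (z * √n) ^ (2 * n) := pow_le_pow_left₀ (by positivity) h _
      _ = (z ^ 2) ^ n * (n : ℝ) ^ n := by rw [mul_pow, pow_mul, pow_mul, sq_sqrt n.cast_nonneg]
  rw [integral_pow_two_mul_gaussianReal, NNReal.coe_one, one_pow, one_mul]
  calc ∫ ω, Z ω ^ (2 * n) ∂ℙ ≤ (z ^ 2) ^ n * (n : ℝ) ^ n := hmom_le
    _ ≤ (z ^ 2) ^ n * (exp 1 / √2 * (exp 1 / 2) ^ n * (2 * n - 1)‼) := by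
        gcongr
        exact pow_self_le_doubleFactorial n
    _ = exp 1 / √2 * (exp 1 * z ^ 2 / 2) ^ n * (2 * n - 1)‼ := by ring

theorem stmt6 {Ω : Type*} [MeasureSpace Ω] [IsProbabilityMeasure (ℙ : Measure Ω)]
    (Z : Ω → ℝ) (hZpos : ∀ ω, 0 ≤ Z ω) (z : ℝ) (hz : 0 ≤ z)
    (hint : ∀ n : ℕ, Integrable (fun ω => Z ω ^ (2 * n)) ℙ)
    (hmom : ∀ n : ℕ, 1 ≤ n →
      (∫ ω, Z ω ^ (2 * n) ∂ℙ) ^ ((1 : ℝ) / (2 * n)) ≤ z * Real.sqrt n) :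
    ∀ n : ℕ, 1 ≤ n →
      ∫ ω, Z ω ^ (2 * n) ∂ℙ
        ≤ (Real.exp 1 / Real.sqrt 2) * (Real.exp 1 * z ^ 2 / 2) ^ n
            * ∫ x, x ^ (2 * n) ∂(gaussianReal 0 1) :=
  stmt6_general Z z hmom
end

section
/- Let Z ≥ 0 satisfy E[Z^{2n}]^{1/(2n)} ≤ z√n for all n ≥ 1. Then for any ε ∈ (0,1] and t = (1-ε)/(z² e), E[exp(t Z²)] ≤ (e/√2)·exp((1-ε²)/(4ε)). -/
open MeasureTheory ProbabilityTheory Real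
open scoped Nat

/-!
Expand `exp (t Z²)` in its power series and integrate term by term (Tonelli). The moment
hypothesis gives `E[Z^{2n}] ≤ (z² n)^n`, and `n^n ≤ eⁿ n!`, so the `n`-th term is at most
`(t z² e)^n = (1 - ε)^n`; summing the geometric series, `E[exp (t Z²)] ≤ 1/ε`. The stated bound
then follows from the elementary inequality `1/ε ≤ (e/√2) exp ((1 - ε²)/(4ε))`.
-/

section ExponentialMoments

variable {Ω : Type*} [MeasurableSpace Ω] {μ : Measure Ω} {X : Ω → ℝ}

lemma aemeasurable_of_integrable_exp (h : Integrable (fun ω => exp (X ω)) μ) :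
    AEMeasurable X μ := by
  simpa only [Function.comp_def, log_exp] using measurable_log.comp_aemeasurable h.aemeasurable

lemma lintegral_ofReal_exp_eq_tsum (hX : ∀ ω, 0 ≤ X ω) (hXm : AEMeasurable X μ) :
    ∫⁻ ω, ENNReal.ofReal (exp (X ω)) ∂μ = ∑' n : ℕ, ∫⁻ ω, ENNReal.ofReal (X ω ^ n / n !) ∂μ := by
  rw [← lintegral_tsum fun n => ((hXm.pow_const n).div_const _).ennreal_ofReal]
  refine lintegral_congr fun ω => ?_
  have hX' := hX ω
  rw [← ENNReal.ofReal_tsum_of_nonneg (fun n => by positivity) (summable_pow_div_factorial _),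
    exp_eq_exp_ℝ, (NormedSpace.expSeries_div_hasSum_exp (X ω)).tsum_eq]

lemma integrable_pow_of_integrable_exp_mul (hX : ∀ ω, 0 ≤ X ω) {t : ℝ} (ht : 0 < t)
    (hint : Integrable (fun ω => exp (t * X ω)) μ) (n : ℕ) :
    Integrable (fun ω => X ω ^ n) μ := by
  have hXm : AEMeasurable X μ := by
    simpa only [mul_div_cancel_left₀ _ ht.ne'] using
      (aemeasurable_of_integrable_exp hint).div_const t
  refine (hint.const_mul (n ! / t ^ n)).mono' (hXm.pow_const n).aestronglyMeasurable
    (ae_of_all _ fun ω => ?_)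
  have hXω := hX ω
  calc ‖X ω ^ n‖ = n ! / t ^ n * ((t * X ω) ^ n / n !) := by
        rw [norm_of_nonneg (by positivity)]; field_simp; ring
    _ ≤ n ! / t ^ n * exp (t * X ω) := by gcongr; exact pow_div_factorial_le_exp _ (by positivity) n

lemma integral_exp_mul_le_of_integral_pow_le [IsProbabilityMeasure μ] (hX : ∀ ω, 0 ≤ X ω)
    {t K : ℝ} (ht : 0 ≤ t) (hK : 0 ≤ K) (hq : t * K * exp 1 < 1)
    (hmom : ∀ n : ℕ, 1 ≤ n → ∫ ω, X ω ^ n ∂μ ≤ (K * n) ^ n) :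
    ∫ ω, exp (t * X ω) ∂μ ≤ (1 - t * K * exp 1)⁻¹ := by
  have hq' : 0 < 1 - t * K * exp 1 := by linarith
  by_cases hint : Integrable (fun ω => exp (t * X ω)) μ
  swap
  · rw [integral_undef hint]; positivity
  rcases ht.eq_or_lt with rfl | ht
  · simp
  have hterm (n : ℕ) :
      ∫⁻ ω, ENNReal.ofReal ((t * X ω) ^ n / n !) ∂μ ≤ ENNReal.ofReal ((t * K * exp 1) ^ n) := by
    rcases n.eq_zero_or_pos with rfl | hn
    · simp
    have hint_n : Integrable (fun ω => (t * X ω) ^ n / n !) μ := by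
      simpa only [mul_pow] using
        ((integrable_pow_of_integrable_exp_mul hX ht hint n).const_mul (t ^ n)).div_const _
    rw [← ofReal_integral_eq_lintegral_ofReal hint_n
      (ae_of_all _ fun ω => by have := hX ω; positivity)]
    refine ENNReal.ofReal_le_ofReal ?_
    calc ∫ ω, ((t * X ω) ^ n / n !) ∂μ = t ^ n / n ! * ∫ ω, X ω ^ n ∂μ := by
          simp_rw [mul_pow]; rw [integral_div, integral_const_mul]; ring
      _ ≤ t ^ n / n ! * (K * n) ^ n := by gcongr; exact hmom n hn
      _ = (t * K) ^ n * (n ^ n / n !) := by ring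
      _ ≤ (t * K) ^ n * exp n := by gcongr; exact pow_div_factorial_le_exp _ n.cast_nonneg n
      _ = (t * K * exp 1) ^ n := by rw [mul_pow _ (exp 1), exp_one_pow]
  have hsum : ∫⁻ ω, ENNReal.ofReal (exp (t * X ω)) ∂μ ≤ ENNReal.ofReal (1 - t * K * exp 1)⁻¹ := by
    have hq0 : 0 ≤ t * K * exp 1 := by positivity
    calc ∫⁻ ω, ENNReal.ofReal (exp (t * X ω)) ∂μ
        = ∑' n : ℕ, ∫⁻ ω, ENNReal.ofReal ((t * X ω) ^ n / n !) ∂μ :=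
          lintegral_ofReal_exp_eq_tsum (fun ω => mul_nonneg ht.le (hX ω))
            (aemeasurable_of_integrable_exp hint)
      _ ≤ ∑' n : ℕ, ENNReal.ofReal ((t * K * exp 1) ^ n) := ENNReal.tsum_le_tsum hterm
      _ = ENNReal.ofReal (1 - t * K * exp 1)⁻¹ := by
          rw [← ENNReal.ofReal_tsum_of_nonneg (fun n => pow_nonneg hq0 n)
            (summable_geometric_of_lt_one hq0 hq), tsum_geometric_of_lt_one hq0 hq]
  rw [integral_eq_lintegral_of_nonneg_ae (ae_of_all _ fun ω => (exp_pos _).le)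
    hint.aestronglyMeasurable]
  exact ENNReal.toReal_le_of_le_ofReal (by positivity) hsum

end ExponentialMoments

lemma inv_le_exp_one_div_sqrt_two_mul_exp {ε : ℝ} (hε0 : 0 < ε) (hε1 : ε ≤ 1) :
    ε⁻¹ ≤ exp 1 / √2 * exp ((1 - ε ^ 2) / (4 * ε)) := by
  have hlog : log 2 / 2 - log ε ≤ 1 + (1 - ε ^ 2) / (4 * ε) := by
    -- `log y ≤ y - 1` at `y = (4ε)⁻¹`, together with `log 2 < 0.6932`
    have h4 : 0 < 4 * ε := by positivity
    have hy := log_le_sub_one_of_pos (inv_pos.2 h4)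
    rw [log_inv, log_mul four_ne_zero hε0.ne', show (4 : ℝ) = 2 ^ 2 by norm_num, log_pow] at hy
    have hl2 := log_two_lt_d9
    have hdiv : (1 - ε ^ 2) / (4 * ε) = (4 * ε)⁻¹ - ε / 4 := by field_simp
    rw [hdiv]
    linarith
  have hsqrt : √2 * ε⁻¹ = exp (log 2 / 2 - log ε) := by
    rw [exp_sub, exp_log hε0, ← log_sqrt zero_le_two, exp_log (by positivity), div_eq_mul_inv]
  rw [div_mul_eq_mul_div, le_div_iff₀ (by positivity), ← exp_add, mul_comm, hsqrt]
  exact exp_le_exp.2 hlog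

lemma le_sq_mul_pow_of_rpow_one_div_le {a c : ℝ} (ha : 0 ≤ a) (hc : 0 ≤ c) {n : ℕ} (hn : 1 ≤ n)
    (h : a ^ ((1 : ℝ) / (2 * n)) ≤ c * √n) : a ≤ (c ^ 2 * n) ^ n := by
  rw [one_div, rpow_inv_le_iff_of_pos ha (by positivity) (by positivity), rpow_mul (by positivity),
    rpow_two, mul_pow, sq_sqrt n.cast_nonneg, rpow_natCast] at h
  exact h

theorem stmt7_general {Ω : Type*} [MeasureSpace Ω] [IsProbabilityMeasure (ℙ : Measure Ω)]
    (Z : Ω → ℝ) (hZpos : ∀ ω, 0 ≤ Z ω) (z : ℝ) (hz : 0 < z)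
    (hmom : ∀ n : ℕ, 1 ≤ n →
      (∫ ω, Z ω ^ (2 * n) ∂ℙ) ^ ((1 : ℝ) / (2 * n)) ≤ z * Real.sqrt n)
    (ε : ℝ) (hε : ε ∈ Set.Ioc (0 : ℝ) 1) :
    ∫ ω, Real.exp ((1 - ε) / (z ^ 2 * Real.exp 1) * Z ω ^ 2) ∂ℙ
      ≤ (Real.exp 1 / Real.sqrt 2) * Real.exp ((1 - ε ^ 2) / (4 * ε)) := by
  obtain ⟨hε0, hε1⟩ := hε
  have hmom_sq (n : ℕ) (hn : 1 ≤ n) : ∫ ω, (Z ω ^ 2) ^ n ∂ℙ ≤ (z ^ 2 * n) ^ n := by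
    simp_rw [← pow_mul]
    exact le_sq_mul_pow_of_rpow_one_div_le (integral_nonneg fun ω => pow_nonneg (hZpos ω) _)
      hz.le hn (hmom n hn)
  have hq : (1 - ε) / (z ^ 2 * exp 1) * z ^ 2 * exp 1 = 1 - ε := by field_simp
  calc ∫ ω, exp ((1 - ε) / (z ^ 2 * exp 1) * Z ω ^ 2) ∂ℙ
      ≤ (1 - (1 - ε) / (z ^ 2 * exp 1) * z ^ 2 * exp 1)⁻¹ :=
        integral_exp_mul_le_of_integral_pow_le (fun ω => sq_nonneg (Z ω))
          (div_nonneg (by linarith) (by positivity)) (sq_nonneg z) (by linarith) hmom_sq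
    _ = ε⁻¹ := by rw [hq, sub_sub_cancel]
    _ ≤ exp 1 / √2 * exp ((1 - ε ^ 2) / (4 * ε)) := inv_le_exp_one_div_sqrt_two_mul_exp hε0 hε1

theorem stmt7 {Ω : Type*} [MeasureSpace Ω] [IsProbabilityMeasure (ℙ : Measure Ω)]
    (Z : Ω → ℝ) (hZpos : ∀ ω, 0 ≤ Z ω) (z : ℝ) (hz : 0 < z)
    (hmom : ∀ n : ℕ, 1 ≤ n →
      (∫ ω, Z ω ^ (2 * n) ∂ℙ) ^ ((1 : ℝ) / (2 * n)) ≤ z * Real.sqrt n)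
    (ε : ℝ) (hε : ε ∈ Set.Ioc (0 : ℝ) 1)
    (hint : Integrable (fun ω => Real.exp ((1 - ε) / (z ^ 2 * Real.exp 1) * Z ω ^ 2)) ℙ) :
    ∫ ω, Real.exp ((1 - ε) / (z ^ 2 * Real.exp 1) * Z ω ^ 2) ∂ℙ
      ≤ (Real.exp 1 / Real.sqrt 2) * Real.exp ((1 - ε ^ 2) / (4 * ε)) :=
  stmt7_general Z hZpos z hz hmom ε hε
end
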